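/- arXiv:2507.12865 — 6 statements merged into one kernel-verified Lean document; each statement's English description precedes it below -/
import Mathlib

section
/- Suppose on an open set of a surface one has orthonormal principal frame {e₁, e₂} with κ₂ = 0 identically and κ₁ nowhere zero, ω(e₂) = 0, and the Gauss equation yields e₂e₂(κ₁) = (2/κ₁) e₂(κ₁)². If moreover μ := e₂(|Φ|²)/2 satisfies μ = -(|Φ|²/(2κ₁)) e₂(κ₁) and e₂(μ) = 1, then differentiating gives e₂e₂(κ₁) = (2/κ₁)e₂(κ₁)² - 2κ₁/|Φ|²; equating the two expressions for e₂e₂(κ₁) forces κ₁ = 0, a contradiction. Hence: there is no flat (K = 0) α-stationary surface with nonconstant principal curvature κ₁. -/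
/-!
`μ = e₂(|Φ|²)/2 = -(|Φ|²/(2κ₁)) e₂(κ₁)` says exactly that `e₂(|Φ|² κ₁) = 0`. Applying `e₂` once
more and substituting `e₂e₂(|Φ|²) = 2` (from `e₂(μ) = 1`) and the Gauss equation for `e₂e₂(κ₁)`,
the terms in `e₂(κ₁)²` cancel and only `2κ₁ = 0` is left.
-/

theorem map_map_mul_of_leibniz {A : Type*} [CommRing A] (D : A → A)
    (hadd : ∀ f g : A, D (f + g) = D f + D g) (hmul : ∀ f g : A, D (f * g) = D f * g + f * D g)
    (f g : A) : D (D (f * g)) = D (D f) * g + 2 * (D f * D g) + f * D (D g) := by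
  rw [hmul, hadd, hmul, hmul]
  ring

theorem map_half_apply_of_map_add {M : Type*} (D : (M → ℝ) → (M → ℝ))
    (hadd : ∀ f g : M → ℝ, D (f + g) = D f + D g) (f : M → ℝ) (x : M) :
    D (fun y => f y / 2) x = D f x / 2 := by
  have hsplit : (fun y => f y / 2) + (fun y => f y / 2) = f := by
    funext y
    simp only [Pi.add_apply]
    ring
  have h := congrFun (hadd (fun y => f y / 2) (fun y => f y / 2)) x
  rw [hsplit, Pi.add_apply] at h
  linarith

theorem no_flat_stationary_with_nonconstant_curvature_general
    {M : Type*} [Nonempty M]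
    (D : (M → ℝ) → (M → ℝ))
    (hadd : ∀ f g : M → ℝ, D (f + g) = D f + D g)
    (hmul : ∀ f g : M → ℝ, D (f * g) = D f * g + f * D g)
    (κ₁ Φsq : M → ℝ)
    (hκ : ∀ x, κ₁ x ≠ 0)
    (hGauss : ∀ x, D (D κ₁) x = 2 / κ₁ x * (D κ₁ x) ^ 2)
    (hμ : ∀ x, D Φsq x / 2 = -(Φsq x / (2 * κ₁ x)) * D κ₁ x)
    (hμ' : ∀ x, D (fun y => D Φsq y / 2) x = 1) :
    False := by
  obtain ⟨x⟩ := ‹Nonempty M›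
  have hDΦsq : ∀ y, D Φsq y = -(Φsq y / κ₁ y) * D κ₁ y := fun y => by
    have := hμ y
    field_simp [hκ y] at this ⊢
    linarith
  have hD_Φsq_mul_κ₁ : D (Φsq * κ₁) = 0 := by
    funext y
    rw [hmul, Pi.add_apply, Pi.mul_apply, Pi.mul_apply, hDΦsq y, Pi.zero_apply]
    field_simp [hκ y]
    ring
  have hDDΦsq : D (D Φsq) x = 2 := by
    have := hμ' x
    rw [map_half_apply_of_map_add D hadd] at this
    linarith
  have hD0 : D 0 = 0 := (AddMonoidHom.mk' D hadd).map_zero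
  have hsecond := congrFun (map_map_mul_of_leibniz D hadd hmul Φsq κ₁) x
  rw [hD_Φsq_mul_κ₁, hD0] at hsecond
  simp only [Pi.add_apply, Pi.mul_apply, Pi.ofNat_apply] at hsecond
  rw [hDDΦsq, hDΦsq x, hGauss x] at hsecond
  field_simp [hκ x] at hsecond
  have hκ_sq : κ₁ x ^ 2 = 0 := by linarith
  exact hκ x (pow_eq_zero_iff two_ne_zero |>.mp hκ_sq)

/-- Case K = 0 of Theorem 1 (flat α-stationary surfaces).  On an open piece of a
flat α-stationary surface in principal coordinates with κ₂ = 0 and κ₁ nowhere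
zero, e₂ acts as a derivation: the Gauss equation gives e₂e₂(κ₁) = (2/κ₁)e₂(κ₁)²,
while the structural equations give μ := e₂(|Φ|²)/2 = -(|Φ|²/(2κ₁))e₂(κ₁) and
e₂(μ) = 1.  Differentiating μ yields e₂e₂(κ₁) = (2/κ₁)e₂(κ₁)² - 2κ₁/|Φ|²;
comparing the two expressions forces κ₁ = 0, a contradiction.  Hence there is no
flat (K = 0) α-stationary surface with nonconstant principal curvature κ₁. -/
theorem no_flat_stationary_with_nonconstant_curvature
    {M : Type*} [Nonempty M]
    (D : (M → ℝ) → (M → ℝ))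
    (hadd : ∀ f g : M → ℝ, D (f + g) = D f + D g)
    (hmul : ∀ f g : M → ℝ, D (f * g) = D f * g + f * D g)
    (hconst : ∀ r : ℝ, D (fun _ => r) = 0)
    (κ₁ Φsq : M → ℝ)
    (hκ : ∀ x, κ₁ x ≠ 0)
    (hΦ : ∀ x, 0 < Φsq x)
    (hGauss : ∀ x, D (D κ₁) x = 2 / κ₁ x * (D κ₁ x) ^ 2)
    (hμ : ∀ x, D Φsq x / 2 = -(Φsq x / (2 * κ₁ x)) * D κ₁ x)
    (hμ' : ∀ x, D (fun y => D Φsq y / 2) x = 1) :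
    False :=
  no_flat_stationary_with_nonconstant_curvature_general D hadd hmul κ₁ Φsq hκ hGauss hμ hμ'
end

section
/- The only isoparametric surfaces in ℝ³ (surfaces with both principal curvatures constant) that satisfy the α-stationary equation H = α⟨N, p⟩/|p|² are: planes through the origin (any α), spheres centered at the origin (α = -2), and spheres through the origin (α = -4). In particular, no circular cylinder is α-stationary for any α. -/
/-!
Each of the three families is tested at a few well-chosen points. A plane `⟪p, n⟫ = d` contains
`d • n`, where the equation forces `α d = 0`. On the sphere of centre `c` and radius `r` the
equation reads `(4 + α) ‖p‖² = α (‖c‖² - r²)`; evaluated at the two ends of the diameter through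
the origin (the near end only when it is not the origin itself), whose squared norms are
`(‖c‖ ± r)²`, it forces `c = 0, α = -2` or `‖c‖ = r, α = -4`. On a cylinder the equation makes
`‖p‖²` constant along each ruling, although `‖p‖` is unbounded on a line.
-/

open scoped RealInnerProductSpace

local notation "E" => EuclideanSpace ℝ (Fin 3)

section

variable {F : Type*} [NormedAddCommGroup F] [InnerProductSpace ℝ F]

theorem exists_norm_eq_one_inner_eq_zero [FiniteDimensional ℝ F]
    (hF : 2 ≤ Module.finrank ℝ F) (u : F) : ∃ v : F, ‖v‖ = 1 ∧ ⟪v, u⟫ = 0 := by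
  have hspan : Module.finrank ℝ (ℝ ∙ u) ≤ 1 := by
    simpa using finrank_span_le_card (R := ℝ) ({u} : Set F)
  have hperp : (ℝ ∙ u)ᗮ ≠ ⊥ := by
    rw [← Submodule.one_le_finrank_iff]
    have := (ℝ ∙ u).finrank_add_finrank_orthogonal
    omega
  obtain ⟨w, hw, hw0⟩ := Submodule.exists_mem_ne_zero_of_ne_bot hperp
  refine ⟨‖w‖⁻¹ • w, norm_smul_inv_norm hw0, ?_⟩
  rw [real_inner_smul_left, Submodule.mem_orthogonal_singleton_iff_inner_left.1 hw, mul_zero]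

theorem exists_norm_eq_one_eq_norm_smul [Nontrivial F] (c : F) :
    ∃ w : F, ‖w‖ = 1 ∧ c = ‖c‖ • w := by
  by_cases hc : c = 0
  · obtain ⟨w, hw⟩ := exists_norm_eq F zero_le_one
    exact ⟨w, hw, by simp [hc]⟩
  · exact ⟨‖c‖⁻¹ • c, norm_smul_inv_norm hc, (smul_inv_smul₀ (norm_ne_zero_iff.2 hc) c).symm⟩

theorem exists_lt_norm_add_smul (x : F) {u : F} (hu : u ≠ 0) (M : ℝ) :
    ∃ t : ℝ, M < ‖x + t • u‖ := by
  have hu' : 0 < ‖u‖ := norm_pos_iff.2 hu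
  refine ⟨(|M| + ‖x‖ + 1) / ‖u‖, ?_⟩
  have hnorm : ‖((|M| + ‖x‖ + 1) / ‖u‖) • u‖ = |M| + ‖x‖ + 1 := by
    rw [norm_smul, Real.norm_of_nonneg (by positivity), div_mul_cancel₀ _ hu'.ne']
  have := norm_sub_le (x + ((|M| + ‖x‖ + 1) / ‖u‖) • u) x
  rw [add_sub_cancel_left, hnorm] at this
  linarith [le_abs_self M]

theorem plane_offset_eq_zero_of_stationary {α d : ℝ} {n : F} (hα : α ≠ 0) (hn : ‖n‖ = 1)
    (h : ∀ p : F, ⟪p, n⟫ = d → p ≠ 0 → (0 : ℝ) = α * ⟪n, p⟫ / ‖p‖ ^ 2) : d = 0 := by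
  by_contra hd
  have hdn : d • n ≠ 0 := smul_ne_zero hd (norm_ne_zero_iff.1 (by simp [hn]))
  have hinner : ⟪n, d • n⟫ = d := by
    rw [real_inner_smul_right, real_inner_self_eq_norm_sq, hn]; ring
  have := h (d • n) (by rw [real_inner_comm, hinner]) hdn
  rw [hinner, eq_comm, div_eq_zero_iff, mul_eq_zero, sq_eq_zero_iff, norm_eq_zero] at this
  tauto

theorem norm_sq_of_sphere_stationary {α r : ℝ} {c p : F} (hr : r ≠ 0) (hp : ‖p - c‖ = r)
    (hp0 : p ≠ 0) (h : 2 / r = α * ⟪(1 / r) • (c - p), p⟫ / ‖p‖ ^ 2) :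
    (4 + α) * ‖p‖ ^ 2 = α * (‖c‖ ^ 2 - r ^ 2) := by
  have hsphere : ‖p‖ ^ 2 - 2 * ⟪c, p⟫ + ‖c‖ ^ 2 = r ^ 2 := by
    rw [← hp, norm_sub_sq_real, real_inner_comm]
  rw [real_inner_smul_left, inner_sub_left, real_inner_self_eq_norm_sq] at h
  have hp2 : ‖p‖ ^ 2 ≠ 0 := pow_ne_zero 2 (norm_ne_zero_iff.2 hp0)
  field_simp at h
  linear_combination 2 * h - α * hsphere

theorem eq_zero_and_eq_neg_two_or_eq_and_eq_neg_four {α m r : ℝ} (hr : 0 < r) (hm : 0 ≤ m)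
    (hfar : (4 + α) * (m + r) ^ 2 = α * (m ^ 2 - r ^ 2))
    (hnear : m ≠ r → (4 + α) * (m - r) ^ 2 = α * (m ^ 2 - r ^ 2)) :
    (m = 0 ∧ α = -2) ∨ (m = r ∧ α = -4) := by
  have hfar' : (4 + α) * (m + r) = α * (m - r) := by
    have : (m + r) * ((4 + α) * (m + r) - α * (m - r)) = 0 := by linear_combination hfar
    simpa [sub_eq_zero, (by positivity : m + r ≠ 0)] using this
  by_cases hmr : m = r
  · right
    subst hmr
    exact ⟨rfl, by nlinarith⟩
  · left
    have hnear' : (4 + α) * (m - r) = α * (m + r) := by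
      have : (m - r) * ((4 + α) * (m - r) - α * (m + r)) = 0 := by
        linear_combination hnear hmr
      simpa [sub_eq_zero, sub_ne_zero.2 hmr] using this
    have hα : α = -2 := by nlinarith
    subst hα
    constructor <;> linarith

theorem sphere_stationary_classification [Nontrivial F] {α r : ℝ} {c : F} (hr : 0 < r)
    (h : ∀ p : F, ‖p - c‖ = r → p ≠ 0 → 2 / r = α * ⟪(1 / r) • (c - p), p⟫ / ‖p‖ ^ 2) :
    (c = 0 ∧ α = -2) ∨ (‖c‖ = r ∧ α = -4) := by
  obtain ⟨w, hw, hcw⟩ := exists_norm_eq_one_eq_norm_smul c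
  have hdiam : ∀ s : ℝ, |s| = r → ‖c‖ + s ≠ 0 →
      (4 + α) * (‖c‖ + s) ^ 2 = α * (‖c‖ ^ 2 - r ^ 2) := by
    intro s hs hcs
    have hpt : c + s • w = (‖c‖ + s) • w := by rw [add_smul, ← hcw]
    have hnorm : ‖c + s • w‖ ^ 2 = (‖c‖ + s) ^ 2 := by
      rw [hpt, norm_smul, hw, mul_one, Real.norm_eq_abs, sq_abs]
    rw [← hnorm]
    refine norm_sq_of_sphere_stationary hr.ne' ?_ ?_ (h _ ?_ ?_) <;>
      first
      | rw [add_sub_cancel_left, norm_smul, hw, mul_one, Real.norm_eq_abs, hs]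
      | rw [hpt]; exact smul_ne_zero hcs (norm_ne_zero_iff.1 (by simp [hw]))
  have := eq_zero_and_eq_neg_two_or_eq_and_eq_neg_four hr (norm_nonneg c)
    (hdiam r (abs_of_pos hr) (by positivity))
    (fun hcr => hdiam (-r) (by simp [abs_of_pos hr]) (sub_ne_zero.2 hcr))
  simpa only [norm_eq_zero] using this

theorem not_cylinder_stationary {α r : ℝ} {a u v : F} (hu : ‖u‖ = 1) (hv : ‖v‖ = 1)
    (hvu : ⟪v, u⟫ = 0) (hr : 0 < r) :
    ¬ ∀ p : F, ‖p - a - ⟪p - a, u⟫ • u‖ = r → p ≠ 0 →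
      1 / r = α * ⟪(-(1 / r)) • (p - a - ⟪p - a, u⟫ • u), p⟫ / ‖p‖ ^ 2 := by
  intro h
  set K := -α * r * (⟪v, a⟫ + r)
  have hruling : ∀ t : ℝ, a + r • v + t • u ≠ 0 → ‖a + r • v + t • u‖ ^ 2 = K := by
    intro t hp0
    have hproj : a + r • v + t • u - a - ⟪a + r • v + t • u - a, u⟫ • u = r • v := by
      have : ⟪a + r • v + t • u - a, u⟫ = t := by
        rw [add_assoc, add_sub_cancel_left, inner_add_left, real_inner_smul_left,
          real_inner_smul_left, hvu, real_inner_self_eq_norm_sq, hu]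
        ring
      rw [this]; abel
    have hvp : ⟪v, a + r • v + t • u⟫ = ⟪v, a⟫ + r := by
      simp [inner_add_right, real_inner_smul_right, hvu, hv]
    have := h _ (by rw [hproj, norm_smul, hv, Real.norm_of_nonneg hr.le, mul_one]) hp0
    rw [hproj, smul_smul, real_inner_smul_left, hvp] at this
    have hp2 : ‖a + r • v + t • u‖ ^ 2 ≠ 0 := pow_ne_zero 2 (norm_ne_zero_iff.2 hp0)
    field_simp at this
    linear_combination this
  have hu0 : u ≠ 0 := by rintro rfl; simp at hu
  obtain ⟨t, ht⟩ := exists_lt_norm_add_smul (a + r • v) hu0 (|K| + 1)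
  have hp0 : a + r • v + t • u ≠ 0 := norm_pos_iff.1 (by linarith [abs_nonneg K])
  nlinarith [hruling t hp0, le_abs_self K]

end

/-- The only isoparametric surfaces of ℝ³ (planes, round spheres and circular
cylinders, taking this classification for granted) satisfying the α-stationary
equation H = α⟪N, p⟫/|p|² (α ≠ 0) at all their points p ≠ 0 are: planes through
the origin, spheres centered at the origin (α = -2) and spheres through the
origin (α = -4).  In particular no circular cylinder is α-stationary. -/
theorem isoparametric_stationary_classification (α : ℝ) (hα : α ≠ 0) :
    -- planes: unit normal n, signed distance d, mean curvature 0
    (∀ (n : E) (d : ℝ), ‖n‖ = 1 →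
      (∀ p : E, ⟪p, n⟫ = d → p ≠ 0 → (0 : ℝ) = α * ⟪n, p⟫ / ‖p‖ ^ 2) →
      d = 0) ∧
    -- spheres: center c, radius r, inward normal (c-p)/r, mean curvature 2/r
    (∀ (c : E) (r : ℝ), 0 < r →
      (∀ p : E, ‖p - c‖ = r → p ≠ 0 →
        2 / r = α * ⟪(1 / r) • (c - p), p⟫ / ‖p‖ ^ 2) →
      (c = 0 ∧ α = -2) ∨ (‖c‖ = r ∧ α = -4)) ∧
    -- circular cylinders of radius r about the line {a + t u}: inward normal
    -- -(p - a - ⟪p - a, u⟫ u)/r, mean curvature 1/r; never stationary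
    (∀ (a u : E) (r : ℝ), ‖u‖ = 1 → 0 < r →
      ¬ (∀ p : E, ‖p - a - ⟪p - a, u⟫ • u‖ = r → p ≠ 0 →
        1 / r = α * ⟪(-(1 / r)) • (p - a - ⟪p - a, u⟫ • u), p⟫ / ‖p‖ ^ 2)) :=
  ⟨fun _ _ hn h => plane_offset_eq_zero_of_stationary hα hn h,
    fun _ _ hr h => sphere_stationary_classification hr h,
    fun _ u _ hu hr => by
      obtain ⟨v, hv, hvu⟩ := exists_norm_eq_one_inner_eq_zero (by simp) u
      exact not_cylinder_stationary hu hv hvu hr⟩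
end

section
/- Let Σ be an α-stationary surface with constant Gauss curvature K ≠ 0, and suppose κ₁ is nonconstant on an umbilic-free open set. Then the tangential components of the position vector satisfy γ = |Φ|²(K - κ₁²)/(2κ₁K + (α+2)κ₁³) · e₁(κ₁) and μ = |Φ|²(K - κ₁²)/(2κ₁³ + (α+2)κ₁K) · e₂(κ₁), provided the denominators are nonzero. -/
section Aux

variable {M : Type*}

/-- From H·κ₁ = κ₁² + K and the Leibniz rule: D H · κ₁² = D κ₁ · (κ₁² − K). -/
lemma aux_derivH (D : (M → ℝ) → (M → ℝ))
    (hadd : ∀ f g : M → ℝ, D (f + g) = D f + D g)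
    (hmul : ∀ f g : M → ℝ, D (f * g) = D f * g + f * D g)
    (hconst : ∀ r : ℝ, D (fun _ => r) = 0)
    (K : ℝ) (κ₁ H : M → ℝ) (hκ : ∀ x, κ₁ x ≠ 0)
    (hH : ∀ x, H x = (κ₁ x ^ 2 + K) / κ₁ x) (x : M) :
    D H x * κ₁ x ^ 2 = D κ₁ x * (κ₁ x ^ 2 - K) := by
  have hfun : H * κ₁ = κ₁ * κ₁ + (fun _ => K) := by
    funext y
    have hy := hκ y
    simp only [Pi.mul_apply, Pi.add_apply, hH y]
    field_simp
    try ring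
  have h2 := congrArg D hfun
  rw [hmul, hadd, hmul, hconst] at h2
  have h3 := congrFun h2 x
  simp only [Pi.add_apply, Pi.mul_apply, Pi.zero_apply, add_zero] at h3
  have hHa : H x * κ₁ x = κ₁ x ^ 2 + K := by
    rw [hH x]; field_simp [hκ x]
  linear_combination κ₁ x * h3 - D κ₁ x * hHa

/-- Leibniz rule for the quotient by the constant α. -/
lemma aux_derivProd (D : (M → ℝ) → (M → ℝ))
    (hmul : ∀ f g : M → ℝ, D (f * g) = D f * g + f * D g)
    (hconst : ∀ r : ℝ, D (fun _ => r) = 0)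
    (α : ℝ) (H Φsq : M → ℝ) (x : M) :
    D (fun y => H y * Φsq y / α) x
      = (D H x * Φsq x + H x * D Φsq x) / α := by
  have hfun : (fun y => H y * Φsq y / α) = (H * Φsq) * (fun _ => α⁻¹) := by
    funext y; simp [div_eq_mul_inv]
  rw [hfun, hmul, hmul, hconst]
  simp [div_eq_mul_inv]
  try ring

end Aux

/-- On an umbilic-free piece of an α-stationary surface with constant Gauss
curvature K ≠ 0 (so κ₂ = K/κ₁ and H = (κ₁² + K)/κ₁), the tangential components
γ = e₁(|Φ|²)/2, μ = e₂(|Φ|²)/2 of the position vector, which satisfy the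
structural equations 0 = eᵢ(H|Φ|²/α) + γκ₁ (resp. + μκ₂) of Lemma 2, are given by
γ = |Φ|²(K - κ₁²)/(2κ₁K + (α+2)κ₁³)·e₁(κ₁) and
μ = |Φ|²(K - κ₁²)/(2κ₁³ + (α+2)κ₁K)·e₂(κ₁), the denominators being nonzero. -/
theorem tangential_components_constant_gauss_curvature
    {M : Type*}
    (D₁ D₂ : (M → ℝ) → (M → ℝ))
    (hadd₁ : ∀ f g : M → ℝ, D₁ (f + g) = D₁ f + D₁ g)
    (hmul₁ : ∀ f g : M → ℝ, D₁ (f * g) = D₁ f * g + f * D₁ g)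
    (hconst₁ : ∀ r : ℝ, D₁ (fun _ => r) = 0)
    (hadd₂ : ∀ f g : M → ℝ, D₂ (f + g) = D₂ f + D₂ g)
    (hmul₂ : ∀ f g : M → ℝ, D₂ (f * g) = D₂ f * g + f * D₂ g)
    (hconst₂ : ∀ r : ℝ, D₂ (fun _ => r) = 0)
    (α K : ℝ) (hα : α ≠ 0) (hK : K ≠ 0)
    (κ₁ Φsq γ μ H : M → ℝ)
    (hκ : ∀ x, κ₁ x ≠ 0)
    (hγ : ∀ x, γ x = D₁ Φsq x / 2)
    (hμ : ∀ x, μ x = D₂ Φsq x / 2)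
    (hH : ∀ x, H x = (κ₁ x ^ 2 + K) / κ₁ x)
    (hlem1 : ∀ x, D₁ (fun y => H y * Φsq y / α) x + γ x * κ₁ x = 0)
    (hlem2 : ∀ x, D₂ (fun y => H y * Φsq y / α) x + μ x * (K / κ₁ x) = 0)
    (hden1 : ∀ x, 2 * κ₁ x * K + (α + 2) * κ₁ x ^ 3 ≠ 0)
    (hden2 : ∀ x, 2 * κ₁ x ^ 3 + (α + 2) * κ₁ x * K ≠ 0) :
    (∀ x, γ x = Φsq x * (K - κ₁ x ^ 2) / (2 * κ₁ x * K + (α + 2) * κ₁ x ^ 3)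
        * D₁ κ₁ x) ∧
    (∀ x, μ x = Φsq x * (K - κ₁ x ^ 2) / (2 * κ₁ x ^ 3 + (α + 2) * κ₁ x * K)
        * D₂ κ₁ x) := by
  constructor
  · intro x
    have hDH := aux_derivH D₁ hadd₁ hmul₁ hconst₁ K κ₁ H hκ hH x
    have hDP := aux_derivProd D₁ hmul₁ hconst₁ α H Φsq x
    have hDφ : D₁ Φsq x = 2 * γ x := by rw [hγ x]; ring
    have hHa : H x * κ₁ x = κ₁ x ^ 2 + K := by
      rw [hH x]; field_simp [hκ x]
    have h := hlem1 x
    rw [hDP, hDφ] at h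
    have h2 : D₁ H x * Φsq x + H x * (2 * γ x) = (-(γ x * κ₁ x)) * α := by
      rw [← div_eq_iff hα]; linarith
    rw [div_mul_eq_mul_div, eq_div_iff (hden1 x)]
    linear_combination κ₁ x ^ 2 * h2 - Φsq x * hDH - 2 * γ x * κ₁ x * hHa
  · intro x
    have hDH := aux_derivH D₂ hadd₂ hmul₂ hconst₂ K κ₁ H hκ hH x
    have hDP := aux_derivProd D₂ hmul₂ hconst₂ α H Φsq x
    have hDφ : D₂ Φsq x = 2 * μ x := by rw [hμ x]; ring
    have hHa : H x * κ₁ x = κ₁ x ^ 2 + K := by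
      rw [hH x]; field_simp [hκ x]
    have h := hlem2 x
    rw [hDP, hDφ] at h
    have h2 : D₂ H x * Φsq x + H x * (2 * μ x) = (-(μ x * (K / κ₁ x))) * α := by
      rw [← div_eq_iff hα]; linarith
    have h3 : (D₂ H x * Φsq x + H x * (2 * μ x)) * κ₁ x = -(μ x * K) * α := by
      rw [h2]; field_simp [hκ x]; try ring
    rw [div_mul_eq_mul_div, eq_div_iff (hden2 x)]
    linear_combination κ₁ x * h3 - Φsq x * hDH - 2 * μ x * κ₁ x * hHa
end

section
/- In the case α = -4 of the proof of Theorem 1 (K ≠ 0 constant, e₁(κ₁) ≠ 0), the relation 2κ₁²K(2|Φ|²K - 3) - 3κ₁⁴ + K² = 0 determines |Φ|² = (1/4)(3κ₁²/K² - 1/κ₁² + 6/K); substituting this into e₁(|Φ|²) = 2γ with γ = |Φ|²(K - κ₁²)/(2κ₁K + (α+2)κ₁³)·e₁(κ₁) and α = -4 yields κ₁² - K = 0, i.e. κ₁ is constant. -/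
/-!
Differentiating the quartic relation between `κ₁` and `|Φ|²` with the Leibniz rule and
eliminating `e₁(|Φ|²)` through the formula for `γ` (which for `α = -4` and `κ₁² ≠ K` reduces to
`κ₁ e₁(|Φ|²) = |Φ|² e₁(κ₁)`) leaves `12 κ₁² e₁(κ₁) (K² |Φ|² - K - κ₁²) = 0`. As
`κ₁ e₁(κ₁) ≠ 0`, this gives `K² |Φ|² = K + κ₁²`, and substituting back into the quartic
relation yields `(κ₁² - K)² = 0`.
-/

section Derivation

variable {M : Type*} {D : (M → ℝ) → (M → ℝ)}

theorem deriv_quartic_relation_of_leibniz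
    (hadd : ∀ f g : M → ℝ, D (f + g) = D f + D g)
    (hmul : ∀ f g : M → ℝ, D (f * g) = D f * g + f * D g)
    (hconst : ∀ r : ℝ, D (fun _ => r) = 0)
    {K : ℝ} {κ Φ : M → ℝ}
    (hrel : ∀ x, 2 * κ x ^ 2 * K * (2 * Φ x * K - 3) - 3 * κ x ^ 4 + K ^ 2 = 0) (x : M) :
    4 * K ^ 2 * (2 * κ x * Φ x * D κ x + κ x ^ 2 * D Φ x)
      - 12 * K * κ x * D κ x - 12 * κ x ^ 3 * D κ x = 0 := by
  have hF : (fun _ => 4 * K ^ 2) * (κ * κ * Φ)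
      + ((fun _ => -6 * K) * (κ * κ)
        + ((fun _ => -3) * (κ * κ * (κ * κ)) + fun _ => K ^ 2)) = fun _ => 0 := by
    funext y
    simp only [Pi.add_apply, Pi.mul_apply]
    linear_combination hrel y
  have hDF := congrFun (congrArg D hF) x
  simp only [hadd, hmul, hconst, Pi.add_apply, Pi.mul_apply, Pi.zero_apply] at hDF
  linear_combination hDF

end Derivation

theorem eq_of_quartic_relation {K k p : ℝ} (hK : K ≠ 0) (hk : k ≠ 0)
    (hrel : 2 * k ^ 2 * K * (2 * p * K - 3) - 3 * k ^ 4 + K ^ 2 = 0) :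
    p = (3 * k ^ 2 / K ^ 2 - 1 / k ^ 2 + 6 / K) / 4 := by
  field_simp
  linear_combination hrel

theorem mul_eq_mul_of_gamma_alpha_minus_four {K k p a b : ℝ} (hk : k ≠ 0) (hkK : k ^ 2 ≠ K)
    (hγ : b = 2 * (p * (K - k ^ 2) / (2 * k * K + ((-4 : ℝ) + 2) * k ^ 3) * a)) :
    k * b = p * a := by
  have hKk : K - k ^ 2 ≠ 0 := sub_ne_zero.mpr hkK.symm
  rw [show 2 * k * K + ((-4 : ℝ) + 2) * k ^ 3 = 2 * k * (K - k ^ 2) by ring] at hγ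
  rw [hγ]
  field_simp

theorem sq_eq_of_quartic_relation_of_deriv {K k p a b : ℝ} (hk : k ≠ 0) (ha : a ≠ 0)
    (hrel : 2 * k ^ 2 * K * (2 * p * K - 3) - 3 * k ^ 4 + K ^ 2 = 0)
    (hderiv : 4 * K ^ 2 * (2 * k * p * a + k ^ 2 * b) - 12 * K * k * a - 12 * k ^ 3 * a = 0)
    (hb : k * b = p * a) :
    k ^ 2 = K := by
  have hp : K ^ 2 * p = K + k ^ 2 := by
    have h : 12 * (k ^ 2 * a) * (K ^ 2 * p - K - k ^ 2) = 0 := by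
      linear_combination k * hderiv - 4 * K ^ 2 * k ^ 2 * hb
    have hka : 12 * (k ^ 2 * a) ≠ 0 := by positivity
    linear_combination (mul_eq_zero.mp h).resolve_left hka
  have hsq : (k ^ 2 - K) ^ 2 = 0 := by linear_combination hrel - 4 * k ^ 2 * hp
  exact sub_eq_zero.mp (pow_eq_zero_iff two_ne_zero |>.mp hsq)

/-- Case α = -4 in the proof of Theorem 1 (K ≠ 0 constant, e₁(κ₁) ≠ 0):
the relation 2κ₁²K(2|Φ|²K - 3) - 3κ₁⁴ + K² = 0 determines
|Φ|² = (1/4)(3κ₁²/K² - 1/κ₁² + 6/K); substituting into e₁(|Φ|²) = 2γ with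
γ = |Φ|²(K - κ₁²)/(2κ₁K + (α+2)κ₁³)·e₁(κ₁), α = -4, yields κ₁² - K = 0,
i.e. κ₁ is constant. -/
theorem case_alpha_minus_four_constant_gauss
    {M : Type*}
    (D : (M → ℝ) → (M → ℝ))
    (hadd : ∀ f g : M → ℝ, D (f + g) = D f + D g)
    (hmul : ∀ f g : M → ℝ, D (f * g) = D f * g + f * D g)
    (hconst : ∀ r : ℝ, D (fun _ => r) = 0)
    (K : ℝ) (hK : K ≠ 0)
    (κ₁ Φsq : M → ℝ)
    (hκ : ∀ x, κ₁ x ≠ 0)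
    (hκK : ∀ x, κ₁ x ^ 2 ≠ K)
    (he : ∀ x, D κ₁ x ≠ 0)
    (hrel : ∀ x, 2 * κ₁ x ^ 2 * K * (2 * Φsq x * K - 3) - 3 * κ₁ x ^ 4 + K ^ 2 = 0)
    (hγ : ∀ x, D Φsq x = 2 * (Φsq x * (K - κ₁ x ^ 2)
        / (2 * κ₁ x * K + ((-4 : ℝ) + 2) * κ₁ x ^ 3) * D κ₁ x)) :
    (∀ x, Φsq x = (3 * κ₁ x ^ 2 / K ^ 2 - 1 / κ₁ x ^ 2 + 6 / K) / 4) ∧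
    (∀ x, κ₁ x ^ 2 = K) := by
  refine ⟨fun x => eq_of_quartic_relation hK (hκ x) (hrel x), fun x => ?_⟩
  exact sq_eq_of_quartic_relation_of_deriv (hκ x) (he x) (hrel x)
    (deriv_quartic_relation_of_leibniz hadd hmul hconst hrel x)
    (mul_eq_mul_of_gamma_alpha_minus_four (hκ x) (hκK x) (hγ x))
end

section
/- For any α ∈ ℝ with α ∉ {0, -2}, there is no closed (compact without boundary) α-stationary surface of the form of a round sphere: a round sphere satisfies H = α⟨N, p⟩/|p|² only if α = -2 (sphere centered at origin) or α = -4 (sphere through origin, which contains 0 in its closure). In particular, for α > -2 no round sphere avoiding the origin is α-stationary. -/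
open scoped RealInnerProductSpace

local notation "E" => EuclideanSpace ℝ (Fin 3)

/-- For α ∉ {0, -2}, a round sphere (center c, radius r, inward normal
N(p) = (c-p)/r, mean curvature 2/r) satisfying the α-stationary equation
H = α⟪N, p⟫/|p|² at all its points p ≠ 0 must be a sphere through the origin
with α = -4 (whose closure contains 0).  In particular no round sphere avoiding
the origin is α-stationary for such α (e.g. for α > -2). -/
theorem no_stationary_sphere_for_other_alpha (α r : ℝ) (hr : 0 < r)
    (hα0 : α ≠ 0) (hα2 : α ≠ -2) (c : E)
    (hstat : ∀ p : E, ‖p - c‖ = r → p ≠ 0 →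
      2 / r = α * ⟪(1 / r) • (c - p), p⟫ / ‖p‖ ^ 2) :
    α = -4 ∧ ‖c‖ = r := by
  have hr0 : r ≠ 0 := ne_of_gt hr
  have key : ∀ u : E, ‖u‖ = 1 → c + r • u ≠ 0 →
      2*‖c‖^2 + (2+α)*r^2 + (4+α)*(r*⟪c,u⟫) = 0 := by
    intro u hu hp
    set p : E := c + r • u with hpdef
    have hsphere : ‖p - c‖ = r := by
      simp [hpdef, norm_smul, hu, abs_of_pos hr]
    have h := hstat p hsphere hp
    have hip : ⟪(1 / r) • (c - p), p⟫ = -⟪u, p⟫ := by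
      have h1 : c - p = (-r) • u := by
        rw [hpdef]; module
      rw [h1, smul_smul]
      have : (1 / r) * (-r) = -1 := by field_simp
      rw [this]
      simp
    have np2 : ‖p‖^2 = ‖c‖^2 + 2*(r*⟪c,u⟫) + r^2 := by
      rw [hpdef, norm_add_sq_real, real_inner_smul_right, norm_smul, hu,
        Real.norm_eq_abs, abs_of_pos hr]
      ring
    have hup : ⟪u, p⟫ = ⟪c,u⟫ + r := by
      rw [hpdef, inner_add_right, real_inner_smul_right, real_inner_comm u c,
        real_inner_self_eq_norm_sq, hu]
      ring
    have hp2 : ‖p‖^2 ≠ 0 := pow_ne_zero _ (norm_ne_zero_iff.mpr hp)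
    rw [hip, hup, np2] at h
    rw [np2] at hp2
    rw [div_eq_div_iff hr0 hp2] at h
    linear_combination h
  -- find a unit vector orthogonal to c
  obtain ⟨u, humem, hu0⟩ : ∃ u : E, u ∈ (ℝ ∙ c)ᗮ ∧ u ≠ 0 := by
    apply Submodule.exists_mem_ne_zero_of_ne_bot
    intro hbot
    have h1 := Submodule.finrank_add_finrank_orthogonal (K := ℝ ∙ c)
    rw [hbot, finrank_bot] at h1
    have h2 : Module.finrank ℝ (ℝ ∙ c) ≤ 1 := by
      by_cases hc : c = 0
      · subst hc; rw [Submodule.span_zero_singleton]; simp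
      · rw [finrank_span_singleton hc]
    rw [finrank_euclideanSpace_fin] at h1
    omega
  set v : E := ‖u‖⁻¹ • u with hvdef
  have hv1 : ‖v‖ = 1 := norm_smul_inv_norm hu0
  have hcv : ⟪c, v⟫ = 0 := by
    have h0 := humem c (Submodule.mem_span_singleton_self c)
    rw [hvdef, real_inner_smul_right, h0, mul_zero]
  have hv0 : c + r • v ≠ 0 := by
    intro h
    have h2 : ⟪c + r • v, v⟫ = 0 := by rw [h]; simp
    rw [inner_add_left, real_inner_smul_left, hcv,
      real_inner_self_eq_norm_sq, hv1] at h2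
    norm_num at h2
    exact hr0 h2
  have hA : 2*‖c‖^2 + (2+α)*r^2 = 0 := by
    have := key v hv1 hv0
    rw [hcv] at this
    linarith
  by_cases hc : c = 0
  · exfalso
    rw [hc] at hA
    simp at hA
    have : (2+α) ≠ 0 := by intro h; apply hα2; linarith
    rcases hA with h | h
    · exact this h
    · exact hr0 h
  · have hcn : ‖c‖ ≠ 0 := norm_ne_zero_iff.mpr hc
    have hcpos : 0 < ‖c‖ := norm_pos_iff.mpr hc
    set w : E := ‖c‖⁻¹ • c with hwdef
    have hw1 : ‖w‖ = 1 := norm_smul_inv_norm hc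
    have hw0 : c + r • w ≠ 0 := by
      have : c + r • w = (1 + r * ‖c‖⁻¹) • c := by
        rw [hwdef, smul_smul, add_smul, one_smul]
      rw [this]
      apply smul_ne_zero _ hc
      positivity
    have hcw : ⟪c, w⟫ = ‖c‖ := by
      rw [hwdef, real_inner_smul_right, real_inner_self_eq_norm_sq, sq]
      field_simp
    have hB := key w hw1 hw0
    rw [hcw] at hB
    have h4 : (4 + α) * (r * ‖c‖) = 0 := by linarith
    have hα4 : α = -4 := by
      rcases mul_eq_zero.mp h4 with h | h
      · linarith
      · rcases mul_eq_zero.mp h with h | h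
        · exact absurd h hr0
        · exact absurd h hcn
    refine ⟨hα4, ?_⟩
    rw [hα4] at hA
    have : (‖c‖ - r) * (‖c‖ + r) = 0 := by nlinarith
    rcases mul_eq_zero.mp this with h | h
    · linarith
    · linarith
end

section
/- Let c ∈ ℝ³ and r > 0, and suppose (2 + α)|p|² = α⟨c, p⟩ for all p with |p - c₀| = r, where c₀ = c. Then either α = -2 and c = 0, or α = -4 and |c| = r. (This is the algebraic identity underlying the classification of stationary spheres.) -/
open scoped RealInnerProductSpace

local notation "E" => EuclideanSpace ℝ (Fin 3)

/-! Write `c = t • u` with `t = ‖c‖` and `u` a unit vector (any unit vector if `c = 0`). The two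
points `(t ± r) • u` lie on the sphere, and the identity there reads
`(2 + α) (t ± r)² = α t (t ± r)`. The difference of the two equations gives `t (α + 4) = 0`, their
sum gives `2 t² + (2 + α) r² = 0`; so either `t = 0` and `α = -2`, or `α = -4` and `t = r`. -/

section

variable {V : Type*} [NormedAddCommGroup V] [InnerProductSpace ℝ V]

theorem exists_norm_eq_one_and_eq_norm_smul [Nontrivial V] (c : V) :
    ∃ u : V, ‖u‖ = 1 ∧ c = ‖c‖ • u := by
  rcases eq_or_ne c 0 with rfl | hc
  · obtain ⟨u, hu⟩ := exists_norm_eq V zero_le_one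
    exact ⟨u, hu, by simp⟩
  · refine ⟨‖c‖⁻¹ • c, norm_smul_inv_norm hc, ?_⟩
    rw [smul_smul, mul_inv_cancel₀ (norm_ne_zero_iff.mpr hc), one_smul]

theorem sphere_relation_along_unit {α r t s : ℝ} {u : V} (hu : ‖u‖ = 1) (hs : |s| = r)
    (h : ∀ p : V, ‖p - t • u‖ = r → (2 + α) * ‖p‖ ^ 2 = α * ⟪t • u, p⟫) :
    (2 + α) * (t + s) ^ 2 = α * (t * (t + s)) := by
  have hp : ‖(t + s) • u - t • u‖ = r := by
    rw [← sub_smul, add_sub_cancel_left, norm_smul, hu, mul_one, Real.norm_eq_abs, hs]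
  have hrel := h _ hp
  simp only [norm_smul, hu, mul_one, Real.norm_eq_abs, sq_abs, real_inner_smul_left,
    real_inner_smul_right, real_inner_self_eq_norm_sq, one_pow] at hrel
  linear_combination hrel

end

theorem sphere_relations_cases {α r t : ℝ} (hr : 0 < r) (ht : 0 ≤ t)
    (hplus : (2 + α) * (t + r) ^ 2 = α * (t * (t + r)))
    (hminus : (2 + α) * (t + -r) ^ 2 = α * (t * (t + -r))) :
    (α = -2 ∧ t = 0) ∨ (α = -4 ∧ t = r) := by
  have hdiff : 2 * r * (t * (α + 4)) = 0 := by linear_combination hplus - hminus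
  have hsum : 2 * t ^ 2 + (2 + α) * r ^ 2 = 0 := by linear_combination (hplus + hminus) / 2
  rcases mul_eq_zero.mp ((mul_eq_zero.mp hdiff).resolve_left (by positivity)) with rfl | hα
  · left
    refine ⟨?_, rfl⟩
    have h2α : (2 + α) * r ^ 2 = 0 := by linarith
    linarith [(mul_eq_zero.mp h2α).resolve_right (by positivity)]
  · right
    obtain rfl : α = -4 := by linarith
    exact ⟨rfl, (pow_left_inj₀ ht hr.le two_ne_zero).mp (by linarith)⟩

/-- The algebraic identity underlying the classification of stationary spheres:
if (2 + α)|p|² = α⟪c, p⟫ for all points p of the sphere of center c and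
radius r > 0, then either α = -2 and c = 0, or α = -4 and |c| = r. -/
theorem stationary_sphere_algebraic (α r : ℝ) (hr : 0 < r) (c : E)
    (h : ∀ p : E, ‖p - c‖ = r → (2 + α) * ‖p‖ ^ 2 = α * ⟪c, p⟫) :
    (α = -2 ∧ c = 0) ∨ (α = -4 ∧ ‖c‖ = r) := by
  obtain ⟨u, hu, hcu⟩ := exists_norm_eq_one_and_eq_norm_smul c
  rw [hcu] at h
  have hplus := sphere_relation_along_unit hu (abs_of_pos hr) h
  have hminus := sphere_relation_along_unit hu (by rw [abs_neg, abs_of_pos hr]) h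
  simpa only [norm_eq_zero] using sphere_relations_cases hr (norm_nonneg c) hplus hminus
end
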